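/- Let δ > 0, λ₁ > 0, λ₂ < 0. The kernel V satisfies the partial differential equation ∂_t² V + (λ₁ + λ₂) ∂²_{yt} V + λ₁λ₂ ∂_y² V + δ ∂_t V = 0 on {(y,t) : t ≥ 0, λ₂ t ≤ y ≤ λ₁ t}. Moreover, for every t ≥ 0: V(λ₁ t, t) = e^{−δλ₁ t/(λ₁−λ₂)}/(λ₁−λ₂) and V(λ₂ t, t) = e^{δλ₂ t/(λ₁−λ₂)}/(λ₁−λ₂); ∂_t V(λ₁ t, t) = (2δλ₁λ₂/(λ₁−λ₂)²)(1 − I₀″(0) δ λ₁ t/(λ₁−λ₂)) V(λ₁ t, t); ∂_y V(λ₁ t, t) = (−δ(λ₁+λ₂)/(λ₁−λ₂)² + 2δ²λ₁λ₂ t I₀″(0)/(λ₁−λ₂)³) V(λ₁ t, t); and ∂_y V(λ₂ t, t) = (−δ(λ₁+λ₂)/(λ₁−λ₂)² − 2δ²λ₁λ₂ t I₀″(0)/(λ₁−λ₂)³) V(λ₂ t, t). -/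

import Mathlib

/-!
Write `κ = δ²λ₁λ₂/(λ₁-λ₂)⁴` and `F_k(u) = ∑ uⁿ/(n!(n+k)!)`, so that `I₀(x) = F₀(x²/4)` and
`V = (λ₁-λ₂)⁻¹ e^φ F₀(Q)` with `φ` linear and `Q = κ(y-λ₁t)(y-λ₂t)`. Termwise differentiation
gives `F_k' = F_{k+1}` and the Bessel equation `u F₂(u) + F₁(u) = F₀(u)`. The operator applied to
`V` is `(λ₁-λ₂)⁻¹ e^φ (c₀ F₀ + c₁ F₁ + c₂ F₂)(Q)`, and the linear part of `φ` is exactly what makes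
`c₀ = -c₁ = δ²λ₁λ₂/(λ₁-λ₂)²` and `c₂ = -c₀ Q`, so the Bessel equation makes it vanish. On the
characteristics `y = λᵢt` the argument `Q` vanishes, and everything reduces to
`F₀(0) = F₁(0) = 1`; in particular `I₀''(0) = F₁(0)/2 = 1/2`.
-/

open MeasureTheory

/-- Modified Bessel function of the first kind, order 0. -/
noncomputable def besselI0 (x : ℝ) : ℝ :=
  ∑' n : ℕ, (1 / ((n.factorial : ℝ)) ^ 2) * (x / 2) ^ (2 * n)

/-- The kernel `V` of the general damped wave equation, written via the power series of `I₀`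
(this coincides on `{t ≥ 0, λ₂t ≤ y ≤ λ₁t}` with the formula involving square roots). -/
noncomputable def Vker (d l1 l2 y t : ℝ) : ℝ :=
  (l1 - l2)⁻¹ *
    Real.exp (-(2 * d / (l1 - l2) ^ 2) * (-(l1 * l2) * t + ((l1 + l2) / 2) * y)) *
    ∑' n : ℕ, (1 / ((n.factorial : ℝ)) ^ 2) *
      ((d ^ 2 * l1 * l2 / (l1 - l2) ^ 4) * ((y - l1 * t) * (y - l2 * t))) ^ n

open Nat

theorem summable_mul_pow_of_abs_le {a : ℕ → ℝ} (ha : ∀ n, |a n| ≤ 1 / n !) (x : ℝ) :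
    Summable fun n => a n * x ^ n := by
  refine .of_norm_bounded (Real.summable_pow_div_factorial |x|) fun n => ?_
  rw [norm_mul, norm_pow, Real.norm_eq_abs, Real.norm_eq_abs, div_eq_mul_one_div, mul_comm]
  gcongr
  exact ha n

theorem summable_pow_pred_div_factorial_pred (r : ℝ) :
    Summable fun n : ℕ => r ^ (n - 1) / (n - 1)! :=
  (summable_nat_add_iff 1).mp (by simpa using Real.summable_pow_div_factorial r)

theorem hasDerivAt_tsum_mul_pow {a : ℕ → ℝ} (ha : ∀ n, |(n + 1) * a (n + 1)| ≤ 1 / n !)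
    (x : ℝ) : HasDerivAt (fun u => ∑' n, a n * u ^ n) (∑' n, (n + 1) * a (n + 1) * x ^ n) x := by
  set r := |x| + 1
  have hx : x ∈ Metric.ball (0 : ℝ) r := by simp [r]
  have hbound : ∀ n, ∀ u ∈ Metric.ball (0 : ℝ) r,
      ‖a n * ((n : ℝ) * u ^ (n - 1))‖ ≤ r ^ (n - 1) / (n - 1)! := by
    rintro (_ | n) u hu
    · simp
    · rw [mem_ball_zero_iff, Real.norm_eq_abs] at hu
      simp only [add_tsub_cancel_right, norm_mul, norm_pow, Real.norm_eq_abs, Nat.cast_succ]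
      calc |a (n + 1)| * (|(n : ℝ) + 1| * |u| ^ n) = |(n + 1) * a (n + 1)| * |u| ^ n := by
            rw [abs_mul]; ring
        _ ≤ 1 / n ! * r ^ n := by gcongr; exact ha n
        _ = r ^ n / n ! := by ring
  have hsum := summable_pow_pred_div_factorial_pred r
  have hderiv := hasDerivAt_tsum_of_isPreconnected hsum Metric.isOpen_ball
    (convex_ball 0 r).isPreconnected (fun n u _ => (hasDerivAt_pow n u).const_mul (a n)) hbound
    (Metric.mem_ball_self (by positivity)) (hasSum_single 0 fun n hn => by simp [hn]).summable hx
  refine hderiv.congr_deriv ?_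
  rw [Summable.tsum_eq_zero_add (.of_norm_bounded hsum fun n => hbound n x hx)]
  simp only [CharP.cast_eq_zero, zero_mul, mul_zero, zero_add, add_tsub_cancel_right, Nat.cast_succ]
  exact tsum_congr fun n => by ring

noncomputable def besselCoeff (k n : ℕ) : ℝ := 1 / ((n ! : ℝ) * (n + k)!)

/-- `besselSeries k (x ^ 2 / 4) * (x / 2) ^ k` is the modified Bessel function `I_k x`. -/
noncomputable def besselSeries (k : ℕ) (u : ℝ) : ℝ := ∑' n, besselCoeff k n * u ^ n

theorem abs_besselCoeff_le (k n : ℕ) : |besselCoeff k n| ≤ 1 / n ! := by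
  have h1 : (1 : ℝ) ≤ (n + k)! := mod_cast (n + k).factorial_pos
  rw [besselCoeff, abs_of_nonneg (by positivity)]
  gcongr
  exact le_mul_of_one_le_right (by positivity) h1

theorem succ_mul_besselCoeff_succ (k n : ℕ) :
    (n + 1) * besselCoeff k (n + 1) = besselCoeff (k + 1) n := by
  rw [besselCoeff, besselCoeff, Nat.add_right_comm n 1 k, ← Nat.add_assoc, Nat.factorial_succ n]
  push_cast
  field_simp

theorem besselCoeff_recurrence (k n : ℕ) :
    besselCoeff (k + 2) n + (k + 1) * besselCoeff (k + 1) (n + 1) = besselCoeff k (n + 1) := by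
  have h1 : ((n + k + 2)! : ℝ) = (n + k + 2) * (n + k + 1)! := by
    rw [Nat.factorial_succ]; push_cast; ring
  have h2 : ((n + k + 1)! : ℝ) = (n + k + 1) * (n + k)! := by
    rw [Nat.factorial_succ]; push_cast; ring
  simp only [besselCoeff, show n + (k + 2) = n + k + 2 by omega,
    show n + 1 + (k + 1) = n + k + 2 by omega, show n + 1 + k = n + k + 1 by omega, h1, h2,
    Nat.factorial_succ n]
  push_cast
  field_simp
  ring

theorem hasDerivAt_besselSeries (k : ℕ) (x : ℝ) :
    HasDerivAt (besselSeries k) (besselSeries (k + 1) x) x := by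
  have h := hasDerivAt_tsum_mul_pow (a := besselCoeff k) (fun n => by
    rw [succ_mul_besselCoeff_succ]; exact abs_besselCoeff_le (k + 1) n) x
  simp only [succ_mul_besselCoeff_succ] at h
  exact h

theorem besselSeries_zero (k : ℕ) : besselSeries k 0 = 1 / k ! := by
  rw [besselSeries, tsum_eq_single 0 fun n hn => by simp [hn]]
  simp [besselCoeff]

theorem besselSeries_ode (k : ℕ) (u : ℝ) :
    u * besselSeries (k + 2) u + (k + 1) * besselSeries (k + 1) u = besselSeries k u := by
  have hs (j : ℕ) : Summable fun n => besselCoeff j n * u ^ n :=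
    summable_mul_pow_of_abs_le (abs_besselCoeff_le j) u
  have hs' (j : ℕ) : Summable fun n => besselCoeff j (n + 1) * u ^ (n + 1) :=
    (summable_nat_add_iff 1).mpr (hs j)
  have hcoeff_zero : (k + 1) * besselCoeff (k + 1) 0 = besselCoeff k 0 := by
    simp only [besselCoeff, Nat.zero_add, Nat.factorial_succ, Nat.factorial_zero, Nat.cast_mul]
    push_cast
    field_simp
  calc u * besselSeries (k + 2) u + (k + 1) * besselSeries (k + 1) u
      = (k + 1) * besselCoeff (k + 1) 0 + ∑' n, (besselCoeff (k + 2) n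
          + (k + 1) * besselCoeff (k + 1) (n + 1)) * u ^ (n + 1) := by
        rw [besselSeries, besselSeries, (hs (k + 1)).tsum_eq_zero_add, ← tsum_mul_left,
          mul_add, ← tsum_mul_left, add_left_comm, ← ((hs (k + 2)).mul_left u).tsum_add
          ((hs' (k + 1)).mul_left _)]
        simp only [pow_zero, mul_one, pow_succ]
        congr 1
        exact tsum_congr fun n => by ring
    _ = besselSeries k u := by
        simp only [hcoeff_zero, besselCoeff_recurrence, besselSeries, (hs k).tsum_eq_zero_add,
          pow_zero, mul_one]

theorem besselI0_eq_besselSeries (x : ℝ) : besselI0 x = besselSeries 0 (x ^ 2 / 4) := by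
  refine tsum_congr fun n => ?_
  rw [besselCoeff, Nat.add_zero, pow_mul, ← sq, div_pow]
  norm_num

theorem iteratedDeriv_two_besselI0_zero : iteratedDeriv 2 besselI0 0 = 1 / 2 := by
  have hsq (x : ℝ) : HasDerivAt (fun y => y ^ 2 / 4) (x / 2) x :=
    ((hasDerivAt_pow 2 x).div_const 4).congr_deriv (by norm_num; ring)
  have hderiv : deriv besselI0 = fun x => besselSeries 1 (x ^ 2 / 4) * (x / 2) := by
    ext x
    rw [funext besselI0_eq_besselSeries]
    exact ((hasDerivAt_besselSeries 0 _).comp x (hsq x)).deriv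
  have h2 : HasDerivAt (fun x => besselSeries 1 (x ^ 2 / 4) * (x / 2)) _ 0 :=
    ((hasDerivAt_besselSeries 1 _).comp 0 (hsq 0)).mul ((hasDerivAt_id 0).div_const 2)
  rw [iteratedDeriv_succ, iteratedDeriv_one, hderiv, h2.deriv]
  norm_num [besselSeries_zero]

theorem HasDerivAt.exp_mul_besselSeries {A Q P R : ℝ → ℝ} {a q p r x : ℝ} (k : ℕ)
    (hA : HasDerivAt A a x) (hQ : HasDerivAt Q q x) (hP : HasDerivAt P p x)
    (hR : HasDerivAt R r x) :
    HasDerivAt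
      (fun s => Real.exp (A s) * (P s * besselSeries k (Q s) + R s * besselSeries (k + 1) (Q s)))
      (Real.exp (A x) * ((a * P x + p) * besselSeries k (Q x)
        + (P x * q + a * R x + r) * besselSeries (k + 1) (Q x)
        + R x * q * besselSeries (k + 2) (Q x))) x := by
  have hF (j : ℕ) := (hasDerivAt_besselSeries j (Q x)).comp x hQ
  refine (hA.exp.mul ((hP.mul (hF k)).add (hR.mul (hF (k + 1))))).congr_deriv ?_
  simp only [Pi.add_apply, Pi.mul_apply, Function.comp_apply]
  ring

section Kernel

variable (d l1 l2 : ℝ)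

noncomputable def kernelPhase (y t : ℝ) : ℝ :=
  2 * d * l1 * l2 / (l1 - l2) ^ 2 * t - d * (l1 + l2) / (l1 - l2) ^ 2 * y

noncomputable def kernelArg (y t : ℝ) : ℝ :=
  d ^ 2 * l1 * l2 / (l1 - l2) ^ 4 * ((y - l1 * t) * (y - l2 * t))

noncomputable def kernelArgDt (y t : ℝ) : ℝ :=
  d ^ 2 * l1 * l2 / (l1 - l2) ^ 4 * (2 * l1 * l2 * t - (l1 + l2) * y)

noncomputable def kernelArgDy (y t : ℝ) : ℝ :=
  d ^ 2 * l1 * l2 / (l1 - l2) ^ 4 * (2 * y - (l1 + l2) * t)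

theorem Vker_eq (y t : ℝ) :
    Vker d l1 l2 y t = (l1 - l2)⁻¹ *
      (Real.exp (kernelPhase d l1 l2 y t) * besselSeries 0 (kernelArg d l1 l2 y t)) := by
  rw [Vker, mul_assoc, kernelPhase, kernelArg, besselSeries]
  congr 3
  · ring
  · ext n
    rw [besselCoeff, Nat.add_zero, sq]

theorem hasDerivAt_kernelPhase_time (y t : ℝ) :
    HasDerivAt (fun s => kernelPhase d l1 l2 y s) (2 * d * l1 * l2 / (l1 - l2) ^ 2) t :=
  ((hasDerivAt_id t).const_mul _).sub_const _ |>.congr_deriv (mul_one _)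

theorem hasDerivAt_kernelPhase_space (y t : ℝ) :
    HasDerivAt (fun z => kernelPhase d l1 l2 z t) (-(d * (l1 + l2)) / (l1 - l2) ^ 2) y :=
  ((hasDerivAt_id y).const_mul _).const_sub _ |>.congr_deriv (by ring)

theorem hasDerivAt_kernelArg_time (y t : ℝ) :
    HasDerivAt (fun s => kernelArg d l1 l2 y s) (kernelArgDt d l1 l2 y t) t :=
  ((((hasDerivAt_id t).const_mul l1).const_sub y).mul
    (((hasDerivAt_id t).const_mul l2).const_sub y)).const_mul _ |>.congr_deriv
    (by simp only [kernelArgDt, id]; ring)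

theorem hasDerivAt_kernelArg_space (y t : ℝ) :
    HasDerivAt (fun z => kernelArg d l1 l2 z t) (kernelArgDy d l1 l2 y t) y :=
  (((hasDerivAt_id y).sub_const (l1 * t)).mul ((hasDerivAt_id y).sub_const (l2 * t))).const_mul _
    |>.congr_deriv (by simp only [kernelArgDy, id]; ring)

theorem hasDerivAt_kernelArgDt_time (y t : ℝ) :
    HasDerivAt (fun s => kernelArgDt d l1 l2 y s)
      (d ^ 2 * l1 * l2 / (l1 - l2) ^ 4 * (2 * l1 * l2)) t :=
  (((hasDerivAt_id t).const_mul _).sub_const _).const_mul _ |>.congr_deriv (by ring)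

theorem hasDerivAt_kernelArgDt_space (y t : ℝ) :
    HasDerivAt (fun z => kernelArgDt d l1 l2 z t)
      (d ^ 2 * l1 * l2 / (l1 - l2) ^ 4 * -(l1 + l2)) y :=
  (((hasDerivAt_id y).const_mul _).const_sub _).const_mul _ |>.congr_deriv (by ring)

theorem hasDerivAt_kernelArgDy_space (y t : ℝ) :
    HasDerivAt (fun z => kernelArgDy d l1 l2 z t) (d ^ 2 * l1 * l2 / (l1 - l2) ^ 4 * 2) y :=
  (((hasDerivAt_id y).const_mul _).sub_const _).const_mul _ |>.congr_deriv (by ring)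

theorem deriv_Vker_time (y : ℝ) :
    deriv (fun s => Vker d l1 l2 y s) = fun s => (l1 - l2)⁻¹ * (Real.exp (kernelPhase d l1 l2 y s) *
      (2 * d * l1 * l2 / (l1 - l2) ^ 2 * besselSeries 0 (kernelArg d l1 l2 y s)
        + kernelArgDt d l1 l2 y s * besselSeries 1 (kernelArg d l1 l2 y s))) := by
  ext t
  simp only [Vker_eq]
  refine (((hasDerivAt_kernelPhase_time d l1 l2 y t).exp.mul ((hasDerivAt_besselSeries 0 _).comp t
    (hasDerivAt_kernelArg_time d l1 l2 y t))).const_mul _).deriv.trans ?_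
  simp only [Function.comp_apply]
  ring

theorem deriv_Vker_space (t : ℝ) :
    deriv (fun z => Vker d l1 l2 z t) = fun z => (l1 - l2)⁻¹ * (Real.exp (kernelPhase d l1 l2 z t) *
      (-(d * (l1 + l2)) / (l1 - l2) ^ 2 * besselSeries 0 (kernelArg d l1 l2 z t)
        + kernelArgDy d l1 l2 z t * besselSeries 1 (kernelArg d l1 l2 z t))) := by
  ext y
  simp only [Vker_eq]
  refine (((hasDerivAt_kernelPhase_space d l1 l2 y t).exp.mul ((hasDerivAt_besselSeries 0 _).comp y
    (hasDerivAt_kernelArg_space d l1 l2 y t))).const_mul _).deriv.trans ?_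
  simp only [Function.comp_apply]
  ring

theorem Vker_pde (h : l1 - l2 ≠ 0) (y t : ℝ) :
    iteratedDeriv 2 (fun s => Vker d l1 l2 y s) t
      + (l1 + l2) * deriv (fun z => deriv (fun s => Vker d l1 l2 z s) t) y
      + l1 * l2 * iteratedDeriv 2 (fun z => Vker d l1 l2 z t) y
      + d * deriv (fun s => Vker d l1 l2 y s) t = 0 := by
  have htt := ((hasDerivAt_kernelPhase_time d l1 l2 y t).exp_mul_besselSeries 0
    (hasDerivAt_kernelArg_time d l1 l2 y t) (hasDerivAt_const t (2 * d * l1 * l2 / (l1 - l2) ^ 2))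
    (hasDerivAt_kernelArgDt_time d l1 l2 y t)).const_mul (l1 - l2)⁻¹
  have hty := ((hasDerivAt_kernelPhase_space d l1 l2 y t).exp_mul_besselSeries 0
    (hasDerivAt_kernelArg_space d l1 l2 y t)
    (hasDerivAt_const y (2 * d * l1 * l2 / (l1 - l2) ^ 2))
    (hasDerivAt_kernelArgDt_space d l1 l2 y t)).const_mul (l1 - l2)⁻¹
  have hyy := ((hasDerivAt_kernelPhase_space d l1 l2 y t).exp_mul_besselSeries 0
    (hasDerivAt_kernelArg_space d l1 l2 y t)
    (hasDerivAt_const y (-(d * (l1 + l2)) / (l1 - l2) ^ 2))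
    (hasDerivAt_kernelArgDy_space d l1 l2 y t)).const_mul (l1 - l2)⁻¹
  simp only [zero_add] at htt hty hyy
  simp only [iteratedDeriv_succ, iteratedDeriv_zero, deriv_Vker_time, deriv_Vker_space, htt.deriv,
    hty.deriv, hyy.deriv]
  rw [← besselSeries_ode 0]
  simp only [kernelArg, kernelArgDt, kernelArgDy]
  field_simp
  ring

theorem kernelPhase_l1_mul (h : l1 - l2 ≠ 0) (t : ℝ) :
    kernelPhase d l1 l2 (l1 * t) t = -(d * l1 * t) / (l1 - l2) := by
  rw [kernelPhase]
  field_simp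
  ring

theorem kernelPhase_l2_mul (h : l1 - l2 ≠ 0) (t : ℝ) :
    kernelPhase d l1 l2 (l2 * t) t = d * l2 * t / (l1 - l2) := by
  rw [kernelPhase]
  field_simp
  ring

theorem kernelArg_l1_mul (t : ℝ) : kernelArg d l1 l2 (l1 * t) t = 0 := by
  rw [kernelArg, sub_self, zero_mul, mul_zero]

theorem kernelArg_l2_mul (t : ℝ) : kernelArg d l1 l2 (l2 * t) t = 0 := by
  rw [kernelArg, sub_self, mul_zero, mul_zero]

theorem Vker_l1_mul (h : l1 - l2 ≠ 0) (t : ℝ) :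
    Vker d l1 l2 (l1 * t) t = Real.exp (-(d * l1 * t) / (l1 - l2)) / (l1 - l2) := by
  rw [Vker_eq, kernelPhase_l1_mul d l1 l2 h, kernelArg_l1_mul, besselSeries_zero,
    Nat.factorial_zero, Nat.cast_one]
  field_simp

theorem Vker_l2_mul (h : l1 - l2 ≠ 0) (t : ℝ) :
    Vker d l1 l2 (l2 * t) t = Real.exp (d * l2 * t / (l1 - l2)) / (l1 - l2) := by
  rw [Vker_eq, kernelPhase_l2_mul d l1 l2 h, kernelArg_l2_mul, besselSeries_zero,
    Nat.factorial_zero, Nat.cast_one]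
  field_simp

theorem deriv_time_Vker_l1_mul (h : l1 - l2 ≠ 0) (t : ℝ) :
    deriv (fun s => Vker d l1 l2 (l1 * t) s) t
      = 2 * d * l1 * l2 / (l1 - l2) ^ 2 * (1 - d * l1 * t / (l1 - l2) / 2)
        * Vker d l1 l2 (l1 * t) t := by
  rw [deriv_Vker_time]
  simp only [Vker_eq, kernelArg_l1_mul, kernelArgDt, besselSeries_zero,
    Nat.factorial_zero, Nat.factorial_one, Nat.cast_one]
  field_simp
  ring

theorem deriv_space_Vker_l1_mul (h : l1 - l2 ≠ 0) (t : ℝ) :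
    deriv (fun z => Vker d l1 l2 z t) (l1 * t)
      = (-(d * (l1 + l2)) / (l1 - l2) ^ 2 + d ^ 2 * l1 * l2 * t / (l1 - l2) ^ 3)
        * Vker d l1 l2 (l1 * t) t := by
  rw [deriv_Vker_space]
  simp only [Vker_eq, kernelArg_l1_mul, kernelArgDy, besselSeries_zero,
    Nat.factorial_zero, Nat.factorial_one, Nat.cast_one]
  field_simp
  ring

theorem deriv_space_Vker_l2_mul (h : l1 - l2 ≠ 0) (t : ℝ) :
    deriv (fun z => Vker d l1 l2 z t) (l2 * t)
      = (-(d * (l1 + l2)) / (l1 - l2) ^ 2 - d ^ 2 * l1 * l2 * t / (l1 - l2) ^ 3)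
        * Vker d l1 l2 (l2 * t) t := by
  rw [deriv_Vker_space]
  simp only [Vker_eq, kernelArg_l2_mul, kernelArgDy, besselSeries_zero,
    Nat.factorial_zero, Nat.factorial_one, Nat.cast_one]
  field_simp
  ring

end Kernel

theorem Vker_pde_and_boundary_values_general
    (d l1 l2 : ℝ) (hl1 : 0 < l1) (hl2 : l2 < 0) :
    (∀ y t : ℝ, 0 ≤ t → l2 * t ≤ y → y ≤ l1 * t →
        iteratedDeriv 2 (fun s => Vker d l1 l2 y s) t
          + (l1 + l2) * deriv (fun z => deriv (fun s => Vker d l1 l2 z s) t) y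
          + l1 * l2 * iteratedDeriv 2 (fun z => Vker d l1 l2 z t) y
          + d * deriv (fun s => Vker d l1 l2 y s) t = 0)
      ∧ (∀ t : ℝ, 0 ≤ t →
          Vker d l1 l2 (l1 * t) t = Real.exp (-(d * l1 * t) / (l1 - l2)) / (l1 - l2)
          ∧ Vker d l1 l2 (l2 * t) t = Real.exp (d * l2 * t / (l1 - l2)) / (l1 - l2)
          ∧ deriv (fun s => Vker d l1 l2 (l1 * t) s) t
              = (2 * d * l1 * l2 / (l1 - l2) ^ 2) *
                  (1 - iteratedDeriv 2 besselI0 0 * d * l1 * t / (l1 - l2)) *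
                  Vker d l1 l2 (l1 * t) t
          ∧ deriv (fun z => Vker d l1 l2 z t) (l1 * t)
              = (-(d * (l1 + l2)) / (l1 - l2) ^ 2
                  + 2 * d ^ 2 * l1 * l2 * t * iteratedDeriv 2 besselI0 0 / (l1 - l2) ^ 3) *
                  Vker d l1 l2 (l1 * t) t
          ∧ deriv (fun z => Vker d l1 l2 z t) (l2 * t)
              = (-(d * (l1 + l2)) / (l1 - l2) ^ 2
                  - 2 * d ^ 2 * l1 * l2 * t * iteratedDeriv 2 besselI0 0 / (l1 - l2) ^ 3) *
                  Vker d l1 l2 (l2 * t) t) := by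
  have h : l1 - l2 ≠ 0 := (sub_pos.mpr (hl2.trans hl1)).ne'
  refine ⟨fun y t _ _ _ => Vker_pde d l1 l2 h y t,
    fun t _ => ⟨Vker_l1_mul d l1 l2 h t, Vker_l2_mul d l1 l2 h t, ?_, ?_, ?_⟩⟩
  all_goals rw [iteratedDeriv_two_besselI0_zero]
  · rw [deriv_time_Vker_l1_mul d l1 l2 h]; ring
  · rw [deriv_space_Vker_l1_mul d l1 l2 h]; ring
  · rw [deriv_space_Vker_l2_mul d l1 l2 h]; ring

/-- Lemma 2.4: the kernel `V` solves the damped wave equation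
`∂ₜ²V + (λ₁+λ₂)∂²_{yt}V + λ₁λ₂∂_y²V + δ∂ₜV = 0` on the region `{t ≥ 0, λ₂t ≤ y ≤ λ₁t}`,
together with the explicit values of `V`, `∂ₜV` and `∂_yV` along the characteristics
`y = λ₁t` and `y = λ₂t`. -/
theorem Vker_pde_and_boundary_values
    (d l1 l2 : ℝ) (hd : 0 < d) (hl1 : 0 < l1) (hl2 : l2 < 0) :
    (∀ y t : ℝ, 0 ≤ t → l2 * t ≤ y → y ≤ l1 * t →
        iteratedDeriv 2 (fun s => Vker d l1 l2 y s) t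
          + (l1 + l2) * deriv (fun z => deriv (fun s => Vker d l1 l2 z s) t) y
          + l1 * l2 * iteratedDeriv 2 (fun z => Vker d l1 l2 z t) y
          + d * deriv (fun s => Vker d l1 l2 y s) t = 0)
      ∧ (∀ t : ℝ, 0 ≤ t →
          Vker d l1 l2 (l1 * t) t = Real.exp (-(d * l1 * t) / (l1 - l2)) / (l1 - l2)
          ∧ Vker d l1 l2 (l2 * t) t = Real.exp (d * l2 * t / (l1 - l2)) / (l1 - l2)
          ∧ deriv (fun s => Vker d l1 l2 (l1 * t) s) t
              = (2 * d * l1 * l2 / (l1 - l2) ^ 2) *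
                  (1 - iteratedDeriv 2 besselI0 0 * d * l1 * t / (l1 - l2)) *
                  Vker d l1 l2 (l1 * t) t
          ∧ deriv (fun z => Vker d l1 l2 z t) (l1 * t)
              = (-(d * (l1 + l2)) / (l1 - l2) ^ 2
                  + 2 * d ^ 2 * l1 * l2 * t * iteratedDeriv 2 besselI0 0 / (l1 - l2) ^ 3) *
                  Vker d l1 l2 (l1 * t) t
          ∧ deriv (fun z => Vker d l1 l2 z t) (l2 * t)
              = (-(d * (l1 + l2)) / (l1 - l2) ^ 2
                  - 2 * d ^ 2 * l1 * l2 * t * iteratedDeriv 2 besselI0 0 / (l1 - l2) ^ 3) *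
                  Vker d l1 l2 (l2 * t) t) :=
  Vker_pde_and_boundary_values_general d l1 l2 hl1 hl2
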